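/- There is a category whose objects are pairs of sets (X,S) and whose morphisms (X,S) → (Y,R) are ∼-equivalence classes of open games, with composition induced by sequential composition of open games and identities given by the identity open games. -/

import Mathlib

/-!
Sequential composition multiplies strategy sets and the identity game has a one-point strategy
set, so the unit and associativity laws hold up to the canonical bijections
`PUnit × Σ ≃ Σ`, `Σ × PUnit ≃ Σ` and `(Σ₁ × Σ₂) × Σ₃ ≃ Σ₁ × (Σ₂ × Σ₃)`, which commute with play,
coplay and best response. Composition respects `∼` in each argument, so it descends to classes.
-/

/-- An open game `(X,S) → (Y,R)`: a set of strategy profiles together with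
play, coplay and best-response functions. -/
structure OpenGame (X S Y R : Type) : Type 1 where
  Strat : Type
  play : Strat → X → Y
  coplay : Strat → X → R → S
  best : X → (Y → R) → Strat → Strat → Prop

/-- The equivalence `∼` of open games: a bijection of strategy sets commuting with
play, coplay and best response. -/
def OpenGame.equivGame {X S Y R : Type} (G₁ G₂ : OpenGame X S Y R) : Prop :=
  ∃ i : G₁.Strat ≃ G₂.Strat,
    (∀ σ x, G₁.play σ x = G₂.play (i σ) x) ∧
    (∀ σ x r, G₁.coplay σ x r = G₂.coplay (i σ) x r) ∧
    (∀ x k σ σ', G₁.best x k σ σ' ↔ G₂.best x k (i σ) (i σ'))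

/-- Sequential composition of open games (diagrammatic order: `G.comp H = H ∘ G`). -/
def OpenGame.comp {X S Y R Z Q : Type} (G : OpenGame X S Y R) (H : OpenGame Y R Z Q) :
    OpenGame X S Z Q where
  Strat := G.Strat × H.Strat
  play p x := H.play p.2 (G.play p.1 x)
  coplay p x q := G.coplay p.1 x (H.coplay p.2 (G.play p.1 x) q)
  best x k p p' :=
    G.best x (fun y => H.coplay p.2 y (k (H.play p.2 y))) p.1 p'.1 ∧
    H.best (G.play p.1 x) k p.2 p'.2

/-- The identity open game. -/
def OpenGame.idGame (X S : Type) : OpenGame X S X S where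
  Strat := PUnit
  play _ x := x
  coplay _ _ s := s
  best _ _ _ _ := True

/-- The monoidal product of open games. -/
def OpenGame.tens {X₁ S₁ Y₁ R₁ X₂ S₂ Y₂ R₂ : Type}
    (G₁ : OpenGame X₁ S₁ Y₁ R₁) (G₂ : OpenGame X₂ S₂ Y₂ R₂) :
    OpenGame (X₁ × X₂) (S₁ × S₂) (Y₁ × Y₂) (R₁ × R₂) where
  Strat := G₁.Strat × G₂.Strat
  play p x := (G₁.play p.1 x.1, G₂.play p.2 x.2)
  coplay p x r := (G₁.coplay p.1 x.1 r.1, G₂.coplay p.2 x.2 r.2)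
  best x k p p' :=
    G₁.best x.1 (fun y₁ => (k (y₁, G₂.play p.2 x.2)).1) p.1 p'.1 ∧
    G₂.best x.2 (fun y₂ => (k (G₁.play p.1 x.1, y₂)).2) p.2 p'.2

/-- The strategically trivial open game determined by `f : X → Y` and `g : R → S`. -/
def OpenGame.lift {X S Y R : Type} (f : X → Y) (g : R → S) : OpenGame X S Y R where
  Strat := PUnit
  play _ x := f x
  coplay _ _ r := g r
  best _ _ _ _ := True

/-- The counit open game `ε_X : (X,X) → (1,1)`. -/
def OpenGame.counit (X : Type) : OpenGame X X PUnit PUnit where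
  Strat := PUnit
  play _ _ := PUnit.unit
  coplay _ x _ := x
  best _ _ _ _ := True

namespace OpenGame

variable {X S Y R Z Q W V : Type}

theorem comp_congr_left {G₁ G₂ : OpenGame X S Y R} (H : OpenGame Y R Z Q)
    (hG : G₁.equivGame G₂) : (G₁.comp H).equivGame (G₂.comp H) := by
  obtain ⟨i, hplay, hcoplay, hbest⟩ := hG
  refine ⟨i.prodCongr (Equiv.refl _), fun σ x => congrArg (H.play σ.2) (hplay σ.1 x),
    fun σ x q => ?_, fun x k σ σ' => and_congr (hbest x _ σ.1 σ'.1) (by rw [hplay]; rfl)⟩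
  show G₁.coplay σ.1 x (H.coplay σ.2 (G₁.play σ.1 x) q) =
    G₂.coplay (i σ.1) x (H.coplay σ.2 (G₂.play (i σ.1) x) q)
  rw [hcoplay, hplay]

theorem comp_congr_right (G : OpenGame X S Y R) {H₁ H₂ : OpenGame Y R Z Q}
    (hH : H₁.equivGame H₂) : (G.comp H₁).equivGame (G.comp H₂) := by
  obtain ⟨j, hplay, hcoplay, hbest⟩ := hH
  exact ⟨(Equiv.refl _).prodCongr j, fun σ x => hplay σ.2 _,
    fun σ x q => congrArg (G.coplay σ.1 x) (hcoplay σ.2 _ q),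
    fun x k σ σ' => and_congr (by simp only [hplay, hcoplay]; rfl) (hbest _ k σ.2 σ'.2)⟩

theorem idGame_comp (G : OpenGame X S Y R) : ((idGame X S).comp G).equivGame G :=
  ⟨Equiv.punitProd _, fun _ _ => rfl, fun _ _ _ => rfl, fun _ _ _ _ => Iff.of_eq (true_and _)⟩

theorem comp_idGame (G : OpenGame X S Y R) : (G.comp (idGame Y R)).equivGame G :=
  ⟨Equiv.prodPUnit _, fun _ _ => rfl, fun _ _ _ => rfl, fun _ _ _ _ => Iff.of_eq (and_true _)⟩

theorem comp_assoc (G : OpenGame X S Y R) (H : OpenGame Y R Z Q) (K : OpenGame Z Q W V) :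
    ((G.comp H).comp K).equivGame (G.comp (H.comp K)) :=
  ⟨Equiv.prodAssoc _ _ _, fun _ _ => rfl, fun _ _ _ => rfl, fun _ _ _ _ => and_assoc⟩

structure Arena : Type 1 where
  X : Type
  S : Type

instance : CategoryTheory.Category Arena where
  Hom A B := Quot (@equivGame A.X A.S B.X B.S)
  id A := Quot.mk _ (idGame A.X A.S)
  comp := Quot.map₂ comp (fun G _ _ => G.comp_congr_right) (fun _ _ H => comp_congr_left H)
  id_comp f := Quot.induction_on f fun G => Quot.sound G.idGame_comp
  comp_id f := Quot.induction_on f fun G => Quot.sound G.comp_idGame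
  assoc f g h := Quot.induction_on₃ f g h fun G H K => Quot.sound (G.comp_assoc H K)

end OpenGame

open CategoryTheory

/-- there is a category whose objects are pairs of sets and whose
morphisms are `∼`-equivalence classes of open games, with composition induced by
sequential composition of open games and identities the identity open games. -/
theorem game_category :
    ∃ (comp : ∀ (X S Y R Z Q : Type),
        Quot (@OpenGame.equivGame X S Y R) → Quot (@OpenGame.equivGame Y R Z Q) →
        Quot (@OpenGame.equivGame X S Z Q))
      (ident : ∀ (X S : Type), Quot (@OpenGame.equivGame X S X S)),
      (∀ (X S Y R Z Q : Type) (G : OpenGame X S Y R) (H : OpenGame Y R Z Q),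
        comp X S Y R Z Q (Quot.mk _ G) (Quot.mk _ H) = Quot.mk _ (G.comp H)) ∧
      (∀ (X S : Type), ident X S = Quot.mk _ (OpenGame.idGame X S)) ∧
      (∀ (X S Y R : Type) (f : Quot (@OpenGame.equivGame X S Y R)),
        comp X S X S Y R (ident X S) f = f) ∧
      (∀ (X S Y R : Type) (f : Quot (@OpenGame.equivGame X S Y R)),
        comp X S Y R Y R f (ident Y R) = f) ∧
      (∀ (X S Y R Z Q W V : Type)
        (f : Quot (@OpenGame.equivGame X S Y R))
        (g : Quot (@OpenGame.equivGame Y R Z Q))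
        (h : Quot (@OpenGame.equivGame Z Q W V)),
        comp X S Z Q W V (comp X S Y R Z Q f g) h =
          comp X S Y R W V f (comp Y R Z Q W V g h)) :=
  ⟨fun X S Y R Z Q => @CategoryStruct.comp OpenGame.Arena _ ⟨X, S⟩ ⟨Y, R⟩ ⟨Z, Q⟩,
    fun X S => 𝟙 (OpenGame.Arena.mk X S),
    fun _ _ _ _ _ _ _ _ => rfl, fun _ _ => rfl,
    fun X S Y R f => @Category.id_comp OpenGame.Arena _ ⟨X, S⟩ ⟨Y, R⟩ f,
    fun X S Y R f => @Category.comp_id OpenGame.Arena _ ⟨X, S⟩ ⟨Y, R⟩ f,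
    fun X S Y R Z Q W V f g h =>
      @Category.assoc OpenGame.Arena _ ⟨X, S⟩ ⟨Y, R⟩ ⟨Z, Q⟩ ⟨W, V⟩ f g h⟩
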